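/- arXiv:1406.4534 — 4 statements merged into one kernel-verified Lean document; each statement's English description precedes it below -/
import Mathlib

section
/- Let C ≤ SL_3(R) be the group of positive diagonal matrices diag(a, b, 1/(ab)) with a, b > 0, and let P_n be the matrix with rows (1, n, 0), (0, 1, 0), (0, 0, 1). Then the conjugates P_n C P_n^{-1} converge, as n → ∞, to the group F = { diag-block matrices with rows (a, t, 0), (0, a, 0), (0, 0, 1/a²) : a > 0, t ∈ R }, in the sense that: (a) every element of F is a limit of a sequence with n-th term in P_n C P_n^{-1}, and (b) every convergent subsequence of elements of P_n C P_n^{-1} has limit in F. -/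
open Filter Topology Matrix

/-- Convergence of a sequence of subsets (subgroups) of a topological space:
(a) every element of `L` is a limit of a sequence with `n`-th term in `H n`;
(b) every subsequential limit of such sequences lies in `L`. -/
def SubgroupConverges {M : Type*} [TopologicalSpace M]
    (H : ℕ → Set M) (L : Set M) : Prop :=
  (∀ l ∈ L, ∃ h : ℕ → M, (∀ n, h n ∈ H n) ∧ Tendsto h atTop (𝓝 l)) ∧
  (∀ h : ℕ → M, (∀ n, h n ∈ H n) → ∀ φ : ℕ → ℕ, StrictMono φ → ∀ l : M,
    Tendsto (h ∘ φ) atTop (𝓝 l) → l ∈ L)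

/-- The positive diagonal Cartan subgroup of SL₃(ℝ), as a set of matrices. -/
def CartanC : Set (Matrix (Fin 3) (Fin 3) ℝ) :=
  {M | ∃ a b : ℝ, 0 < a ∧ 0 < b ∧ M = Matrix.diagonal ![a, b, 1 / (a * b)]}

noncomputable def P3 (n : ℕ) : Matrix (Fin 3) (Fin 3) ℝ :=
  !![1, (n : ℝ), 0; 0, 1, 0; 0, 0, 1]

def groupF : Set (Matrix (Fin 3) (Fin 3) ℝ) :=
  {M | ∃ a t : ℝ, 0 < a ∧ M = !![a, t, 0; 0, a, 0; 0, 0, 1 / a ^ 2]}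

/-! Conjugating `diag(a, b, c)` by `P_n` gives the matrix with rows `(a, n (b - a), 0)`,
`(0, b, 0)`, `(0, 0, c)`. Choosing `b = a + t / n` produces any element of `F` in the limit.
Conversely, along a convergent subsequence the entry `n (b - a)` stays bounded while `n → ∞`,
so `b - a → 0` and the limit has equal first two diagonal entries; the relation `a b c = 1`
passes to the limit and forces `a > 0` and `c = 1 / a²`. -/

section UpperTriBlock

variable {R : Type*}

def upperTriBlock [Zero R] (a s b c : R) : Matrix (Fin 3) (Fin 3) R :=
  !![a, s, 0; 0, b, 0; 0, 0, c]

variable [TopologicalSpace R] [Zero R] {ι : Type*} {F : Filter ι} {a s b c : ι → R}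

theorem tendsto_upperTriBlock_iff {A S B C : R} :
    Tendsto (fun k => upperTriBlock (a k) (s k) (b k) (c k)) F (𝓝 (upperTriBlock A S B C)) ↔
      Tendsto a F (𝓝 A) ∧ Tendsto s F (𝓝 S) ∧ Tendsto b F (𝓝 B) ∧ Tendsto c F (𝓝 C) := by
  refine tendsto_pi_nhds.trans ?_
  simp only [tendsto_pi_nhds, Fin.forall_fin_succ, upperTriBlock]
  simp [tendsto_const_nhds, and_assoc]

theorem eq_upperTriBlock_of_tendsto [T2Space R] [F.NeBot] {M : Matrix (Fin 3) (Fin 3) R}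
    (h : Tendsto (fun k => upperTriBlock (a k) (s k) (b k) (c k)) F (𝓝 M)) :
    M = upperTriBlock (M 0 0) (M 0 1) (M 1 1) (M 2 2) :=
  have entry (i j : Fin 3) := ((continuous_id.matrix_elem i j).tendsto M).comp h
  tendsto_nhds_unique h <|
    tendsto_upperTriBlock_iff.2 ⟨entry 0 0, entry 0 1, entry 1 1, entry 2 2⟩

end UpperTriBlock

theorem Filter.Tendsto.exists_forall_mem_of_eventually_mem {M ι : Type*} [TopologicalSpace M]
    {F : Filter ι} {H : ι → Set M} (hne : ∀ i, (H i).Nonempty) {g : ι → M} {l : M}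
    (hg : Tendsto g F (𝓝 l)) (hmem : ∀ᶠ i in F, g i ∈ H i) :
    ∃ h : ι → M, (∀ i, h i ∈ H i) ∧ Tendsto h F (𝓝 l) := by
  classical
  refine ⟨fun i => if g i ∈ H i then g i else (hne i).some, fun i => ?_, hg.congr' ?_⟩
  · dsimp only
    split_ifs with hi
    exacts [hi, (hne i).some_mem]
  · filter_upwards [hmem] with i hi using (if_pos hi).symm

theorem Filter.Tendsto.tendsto_zero_of_tendsto_mul {ι : Type*} {F : Filter ι} {N x : ι → ℝ}
    {S : ℝ} (hN : Tendsto N F atTop) (hNx : Tendsto (fun i => N i * x i) F (𝓝 S)) :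
    Tendsto x F (𝓝 0) := by
  have h := hNx.mul hN.inv_tendsto_atTop
  rw [mul_zero] at h
  refine h.congr' ?_
  filter_upwards [hN.eventually_gt_atTop 0] with i hi
  simp only [Pi.inv_apply]
  field_simp

theorem P3_inv (n : ℕ) : (P3 n)⁻¹ = !![1, -(n : ℝ), 0; 0, 1, 0; 0, 0, 1] :=
  Matrix.inv_eq_right_inv <| by simp [P3, Matrix.one_fin_three]

theorem P3_mul_diagonal_mul_inv (n : ℕ) (a b c : ℝ) :
    P3 n * Matrix.diagonal ![a, b, c] * (P3 n)⁻¹ = upperTriBlock a (n * (b - a)) b c := by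
  rw [P3_inv, Matrix.diagonal_fin_three]
  simp [P3, upperTriBlock]
  ring_nf

theorem image_conj_cartanC (n : ℕ) :
    (fun M => P3 n * M * (P3 n)⁻¹) '' CartanC =
      {M | ∃ a b : ℝ, 0 < a ∧ 0 < b ∧ M = upperTriBlock a (n * (b - a)) b (1 / (a * b))} := by
  ext M
  simp only [CartanC, Set.mem_image, Set.mem_ofPred_eq]
  constructor
  · rintro ⟨_, ⟨a, b, ha, hb, rfl⟩, rfl⟩
    exact ⟨a, b, ha, hb, P3_mul_diagonal_mul_inv n a b _⟩
  · rintro ⟨a, b, ha, hb, rfl⟩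
    exact ⟨_, ⟨a, b, ha, hb, rfl⟩, P3_mul_diagonal_mul_inv n a b _⟩

theorem limit_of_conj_cartan_entries {ι : Type*} {F : Filter ι} [F.NeBot] {N a b : ι → ℝ}
    {A S B C : ℝ} (ha₀ : ∀ i, 0 < a i) (hb₀ : ∀ i, 0 < b i) (hN : Tendsto N F atTop)
    (ha : Tendsto a F (𝓝 A)) (hs : Tendsto (fun i => N i * (b i - a i)) F (𝓝 S))
    (hb : Tendsto b F (𝓝 B)) (hc : Tendsto (fun i => 1 / (a i * b i)) F (𝓝 C)) :
    0 < A ∧ B = A ∧ C = 1 / A ^ 2 := by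
  have hBA : B = A := by
    have := (hN.tendsto_zero_of_tendsto_mul hs).add ha
    rw [zero_add] at this
    exact tendsto_nhds_unique (hb.congr fun i => by ring) this
  have hABC : A * B * C = 1 := by
    refine tendsto_nhds_unique ((ha.mul hb).mul hc) (tendsto_const_nhds.congr fun i => ?_)
    exact (mul_one_div_cancel (mul_pos (ha₀ i) (hb₀ i)).ne').symm
  rw [hBA] at hABC
  have hA : 0 < A := (ge_of_tendsto' ha fun i => (ha₀ i).le).lt_of_ne' fun h => by
    simp [h] at hABC
  refine ⟨hA, hBA, ?_⟩
  field_simp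
  linear_combination hABC

theorem exists_tendsto_of_mem_groupF {M : Matrix (Fin 3) (Fin 3) ℝ} (hM : M ∈ groupF) :
    ∃ h : ℕ → Matrix (Fin 3) (Fin 3) ℝ,
      (∀ n, h n ∈ (fun M => P3 n * M * (P3 n)⁻¹) '' CartanC) ∧ Tendsto h atTop (𝓝 M) := by
  obtain ⟨A, t, hA, rfl⟩ := hM
  have hC : CartanC.Nonempty := ⟨_, 1, 1, one_pos, one_pos, rfl⟩
  have hb : Tendsto (fun n : ℕ => A + t / n) atTop (𝓝 A) := by
    simpa using tendsto_const_nhds.add (tendsto_const_div_atTop_nhds_zero_nat t)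
  have hc : Tendsto (fun n : ℕ => 1 / (A * (A + t / n))) atTop (𝓝 (1 / A ^ 2)) := by
    rw [sq]
    exact tendsto_const_nhds.div (tendsto_const_nhds.mul hb) (by positivity)
  refine Tendsto.exists_forall_mem_of_eventually_mem
    (fun _ => hC.image _)
    (tendsto_upperTriBlock_iff.2 ⟨tendsto_const_nhds, tendsto_const_nhds, hb, hc⟩) ?_
  filter_upwards [hb.eventually (lt_mem_nhds hA), eventually_ne_atTop 0] with n hpos hn
  rw [image_conj_cartanC]
  refine ⟨A, A + t / n, hA, hpos, ?_⟩
  rw [add_sub_cancel_left, mul_div_cancel₀ _ (Nat.cast_ne_zero.2 hn)]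

theorem mem_groupF_of_tendsto {h : ℕ → Matrix (Fin 3) (Fin 3) ℝ}
    (hmem : ∀ n, h n ∈ (fun M => P3 n * M * (P3 n)⁻¹) '' CartanC) {φ : ℕ → ℕ}
    (hφ : StrictMono φ) {M : Matrix (Fin 3) (Fin 3) ℝ} (hM : Tendsto (h ∘ φ) atTop (𝓝 M)) :
    M ∈ groupF := by
  simp only [image_conj_cartanC] at hmem
  choose a b ha₀ hb₀ hab using hmem
  rw [funext hab] at hM
  have hM_eq := eq_upperTriBlock_of_tendsto hM
  rw [hM_eq] at hM ⊢
  obtain ⟨ha, hs, hb, hc⟩ := tendsto_upperTriBlock_iff.1 hM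
  obtain ⟨hA, hBA, hC⟩ := limit_of_conj_cartan_entries (fun k => ha₀ (φ k)) (fun k => hb₀ (φ k))
    (tendsto_natCast_atTop_atTop.comp hφ.tendsto_atTop) ha hs hb hc
  rw [hBA, hC]
  exact ⟨_, _, hA, rfl⟩

/-- `P_n C P_n⁻¹` converges to the group `F`. -/
theorem cartan_conj_converges_to_F :
    SubgroupConverges
      (fun n => (fun M => P3 n * M * (P3 n)⁻¹) '' CartanC) groupF :=
  ⟨fun _ => exists_tendsto_of_mem_groupF, fun _ hmem _ hφ _ => mem_groupF_of_tendsto hmem hφ⟩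
end

section
/- The five subgroups C, F, N_1, N_2, N_3 of SL_3(R) are pairwise non-conjugate in GL_3(R), where C = { diag(a,b,1/(ab)) : a,b > 0 }, F = { rows (a,t,0),(0,a,0),(0,0,1/a²) : a>0, t ∈ R }, N_1 = { rows (1,s,t),(0,1,s),(0,0,1) }, N_2 = { rows (1,s,t),(0,1,0),(0,0,1) }, N_3 = { rows (1,0,t),(0,1,s),(0,0,1) }. -/
open Matrix

def groupN1 : Set (Matrix (Fin 3) (Fin 3) ℝ) :=
  {M | ∃ s t : ℝ, M = !![1, s, t; 0, 1, s; 0, 0, 1]}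

def groupN2 : Set (Matrix (Fin 3) (Fin 3) ℝ) :=
  {M | ∃ s t : ℝ, M = !![1, s, t; 0, 1, 0; 0, 0, 1]}

def groupN3 : Set (Matrix (Fin 3) (Fin 3) ℝ) :=
  {M | ∃ s t : ℝ, M = !![1, 0, t; 0, 1, s; 0, 0, 1]}

/-- Two subsets of matrices are conjugate in `GL₃(ℝ)`. -/
def IsGLConjugate (H K : Set (Matrix (Fin 3) (Fin 3) ℝ)) : Prop :=
  ∃ P : GL (Fin 3) ℝ,
    (fun M => (P : Matrix (Fin 3) (Fin 3) ℝ) * M *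
      ((P⁻¹ : GL (Fin 3) ℝ) : Matrix (Fin 3) (Fin 3) ℝ)) '' H = K

open Module

/-!
Four conjugation invariants separate the groups. `C` and `F` contain elements of trace `≠ 3`,
while `N₁, N₂, N₃` are unipotent. `F` contains a nontrivial `M` with `(M - 1)² = 0`, which is
impossible for a diagonal matrix over `ℝ`. `N₁` contains an `M` with `(M - 1)² ≠ 0`, while
`(M - 1)² = 0` throughout `N₂` and `N₃`. Finally, the vectors fixed by all of `N₃` form a plane,
those fixed by all of `N₂` only a line.
-/

theorem Units.conj_eq_one_iff {A : Type*} [Monoid A] (u : Aˣ) (x : A) :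
    u * x * ↑u⁻¹ = 1 ↔ x = 1 := by
  rw [Units.mul_inv_eq_one, u.isUnit.mul_eq_left]

theorem Units.conj_sub_one_pow_eq_zero_iff {A : Type*} [Ring A] (u : Aˣ) (x : A) (k : ℕ) :
    (u * x * ↑u⁻¹ - 1) ^ k = 0 ↔ (x - 1) ^ k = 0 := by
  rw [show (u * x * ↑u⁻¹ - 1 : A) = u * (x - 1) * ↑u⁻¹ by rw [mul_sub, sub_mul, mul_one, u.mul_inv],
    Units.conj_pow, Units.mul_left_eq_zero, Units.mul_right_eq_zero]

theorem Matrix.diagonal_eq_one_of_sub_one_sq_eq_zero {n R : Type*} [Fintype n] [DecidableEq n]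
    [CommRing R] [IsReduced R] {d : n → R} (h : (diagonal d - 1) ^ 2 = 0) : diagonal d = 1 := by
  rw [← diagonal_one, diagonal_sub, diagonal_pow, diagonal_eq_zero] at h
  rw [← diagonal_one, diagonal_eq_diagonal_iff]
  exact fun i => sub_eq_zero.1 (IsReduced.eq_zero _ ⟨2, congrFun h i⟩)

section FixedSubspace

variable {n R : Type*} [Fintype n] [CommRing R]

def fixedSubspace (G : Set (Matrix n n R)) : Submodule R (n → R) :=
  ⨅ M ∈ G, LinearMap.ker (M.mulVecLin - LinearMap.id)

theorem mem_fixedSubspace {G : Set (Matrix n n R)} {v : n → R} :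
    v ∈ fixedSubspace G ↔ ∀ M ∈ G, M *ᵥ v = v := by
  simp [fixedSubspace, sub_eq_zero]

theorem finrank_fixedSubspace_le_conj {K : Type*} [Field K] [DecidableEq n] (P : GL n K) (G : Set (Matrix n n K)) :
    finrank K (fixedSubspace G) ≤ finrank K (fixedSubspace
      ((fun M => (P : Matrix n n K) * M * ((P⁻¹ : GL n K) : Matrix n n K)) '' G)) := by
  have hmaps : ∀ v ∈ fixedSubspace G, (P : Matrix n n K).mulVecLin v ∈ fixedSubspace
      ((fun M => (P : Matrix n n K) * M * ((P⁻¹ : GL n K) : Matrix n n K)) '' G) := by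
    simp only [mem_fixedSubspace, Set.forall_mem_image, mulVecLin_apply]
    intro v hv M hM
    rw [mulVec_mulVec, mul_assoc _ _ (P : Matrix n n K), P.inv_mul, mul_one, ← mulVec_mulVec,
      hv M hM]
  refine LinearMap.finrank_le_finrank_of_injective
    (f := (P : Matrix n n K).mulVecLin.restrict hmaps) fun v w h => Subtype.ext ?_
  exact mulVec_injective_of_isUnit P.isUnit (congrArg Subtype.val h)

end FixedSubspace

local notation "Mat₃" => Matrix (Fin 3) (Fin 3) ℝ

namespace IsGLConjugate

variable {H K : Set Mat₃}

theorem symm (h : IsGLConjugate H K) : IsGLConjugate K H := by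
  obtain ⟨P, rfl⟩ := h
  refine ⟨P⁻¹, ?_⟩
  rw [Set.image_image]
  convert Set.image_id H using 2 with M
  simp [← mul_assoc]

theorem finrank_fixedSubspace_le (h : IsGLConjugate H K) :
    finrank ℝ (fixedSubspace H) ≤ finrank ℝ (fixedSubspace K) := by
  obtain ⟨P, rfl⟩ := h
  exact finrank_fixedSubspace_le_conj P H

end IsGLConjugate

section Invariants

variable {H K : Set Mat₃}

theorem not_isGLConjugate_of_exists {p : Mat₃ → Prop}
    (hp : ∀ (P : GL (Fin 3) ℝ) M, p M → p (P * M * ((P⁻¹ : GL (Fin 3) ℝ) : Mat₃)))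
    (hH : ∃ M ∈ H, p M) (hK : ∀ M ∈ K, ¬ p M) : ¬ IsGLConjugate H K := by
  rintro ⟨P, rfl⟩
  obtain ⟨M, hM, hpM⟩ := hH
  exact hK _ (Set.mem_image_of_mem _ hM) (hp P M hpM)

theorem not_isGLConjugate_of_trace (hH : ∃ M ∈ H, trace M ≠ 3) (hK : ∀ M ∈ K, trace M = 3) :
    ¬ IsGLConjugate H K :=
  not_isGLConjugate_of_exists (fun P M => (trace_units_conj P M).trans_ne) hH
    fun M hM hne => hne (hK M hM)

theorem not_isGLConjugate_of_sub_one_sq (hH : ∃ M ∈ H, (M - 1) ^ 2 ≠ 0)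
    (hK : ∀ M ∈ K, (M - 1) ^ 2 = 0) : ¬ IsGLConjugate H K :=
  not_isGLConjugate_of_exists (fun P M hM h => hM ((P.conj_sub_one_pow_eq_zero_iff M 2).1 h))
    hH fun M hM hne => hne (hK M hM)

theorem not_isGLConjugate_of_eq_one_of_sub_one_sq (hH : ∀ M ∈ H, (M - 1) ^ 2 = 0 → M = 1)
    (hK : ∃ M ∈ K, M ≠ 1 ∧ (M - 1) ^ 2 = 0) : ¬ IsGLConjugate H K := fun h =>
  not_isGLConjugate_of_exists
    (fun P M ⟨hne, hsq⟩ =>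
      ⟨mt (P.conj_eq_one_iff M).1 hne, (P.conj_sub_one_pow_eq_zero_iff M 2).2 hsq⟩)
    hK (fun M hM ⟨hne, hsq⟩ => hne (hH M hM hsq)) h.symm

theorem not_isGLConjugate_of_finrank_fixedSubspace_lt
    (h : finrank ℝ (fixedSubspace H) < finrank ℝ (fixedSubspace K)) : ¬ IsGLConjugate H K :=
  fun hc => h.not_ge hc.symm.finrank_fixedSubspace_le

end Invariants

theorem exists_mem_CartanC_trace_ne_three : ∃ M ∈ CartanC, trace M ≠ 3 :=
  ⟨_, ⟨2, 2, two_pos, two_pos, rfl⟩, by simp [trace_diagonal, Fin.sum_univ_three]; norm_num⟩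

theorem exists_mem_groupF_trace_ne_three : ∃ M ∈ groupF, trace M ≠ 3 :=
  ⟨_, ⟨2, 0, two_pos, rfl⟩, by simp [trace_fin_three]; norm_num⟩

theorem trace_eq_three_of_mem_groupN1 {M : Mat₃} (hM : M ∈ groupN1) : trace M = 3 := by
  obtain ⟨s, t, rfl⟩ := hM
  simp [trace_fin_three]
  norm_num

theorem trace_eq_three_of_mem_groupN2 {M : Mat₃} (hM : M ∈ groupN2) : trace M = 3 := by
  obtain ⟨s, t, rfl⟩ := hM
  simp [trace_fin_three]
  norm_num

theorem trace_eq_three_of_mem_groupN3 {M : Mat₃} (hM : M ∈ groupN3) : trace M = 3 := by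
  obtain ⟨s, t, rfl⟩ := hM
  simp [trace_fin_three]
  norm_num

theorem exists_mem_groupF_ne_one_sub_one_sq_eq_zero : ∃ M ∈ groupF, M ≠ 1 ∧ (M - 1) ^ 2 = 0 := by
  refine ⟨_, ⟨1, 1, one_pos, rfl⟩, fun h => ?_, ?_⟩
  · simpa using congr_fun₂ h 0 1
  · simp [sq, one_fin_three]

theorem eq_one_of_mem_CartanC_of_sub_one_sq_eq_zero {M : Mat₃} (hM : M ∈ CartanC)
    (hsq : (M - 1) ^ 2 = 0) : M = 1 := by
  obtain ⟨a, b, -, -, rfl⟩ := hM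
  exact diagonal_eq_one_of_sub_one_sq_eq_zero hsq

theorem exists_mem_groupN1_sub_one_sq_ne_zero : ∃ M ∈ groupN1, (M - 1) ^ 2 ≠ 0 :=
  ⟨_, ⟨1, 0, rfl⟩, fun h => by simpa [sq, one_fin_three] using congr_fun₂ h 0 2⟩

theorem sub_one_sq_eq_zero_of_mem_groupN2 {M : Mat₃} (hM : M ∈ groupN2) : (M - 1) ^ 2 = 0 := by
  obtain ⟨s, t, rfl⟩ := hM
  simp [sq, one_fin_three]

theorem sub_one_sq_eq_zero_of_mem_groupN3 {M : Mat₃} (hM : M ∈ groupN3) : (M - 1) ^ 2 = 0 := by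
  obtain ⟨s, t, rfl⟩ := hM
  simp [sq, one_fin_three]

theorem finrank_fixedSubspace_groupN2_le : finrank ℝ (fixedSubspace groupN2) ≤ 1 := by
  have hle : fixedSubspace groupN2 ≤ ℝ ∙ ![1, 0, 0] := by
    intro v hv
    rw [mem_fixedSubspace] at hv
    have h1 : v 1 = 0 := by
      simpa [mulVec, dotProduct, Fin.sum_univ_three] using congrFun (hv _ ⟨1, 0, rfl⟩) 0
    have h2 : v 2 = 0 := by
      simpa [mulVec, dotProduct, Fin.sum_univ_three] using congrFun (hv _ ⟨0, 1, rfl⟩) 0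
    refine Submodule.mem_span_singleton.2 ⟨v 0, ?_⟩
    ext i; fin_cases i <;> simp [h1, h2]
  calc finrank ℝ (fixedSubspace groupN2) ≤ finrank ℝ (ℝ ∙ ![(1 : ℝ), 0, 0]) :=
        Submodule.finrank_mono hle
    _ = 1 := finrank_span_singleton (by simp)

theorem two_le_finrank_fixedSubspace_groupN3 : 2 ≤ finrank ℝ (fixedSubspace groupN3) := by
  let v : Fin 2 → Fin 3 → ℝ := ![![1, 0, 0], ![0, 1, 0]]
  have hv : LinearIndependent ℝ v := by
    rw [LinearIndependent.pair_iff]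
    intro s t h
    exact ⟨by simpa using congrFun h 0, by simpa using congrFun h 1⟩
  have hle : Submodule.span ℝ (Set.range v) ≤ fixedSubspace groupN3 := by
    rw [Submodule.span_le]
    rintro _ ⟨i, rfl⟩
    rw [SetLike.mem_coe, mem_fixedSubspace]
    rintro _ ⟨s, t, rfl⟩
    fin_cases i <;> ext j <;> fin_cases j <;> simp [v, mulVec, dotProduct, Fin.sum_univ_three]
  calc 2 = finrank ℝ (Submodule.span ℝ (Set.range v)) := by simp [finrank_span_eq_card hv]
    _ ≤ _ := Submodule.finrank_mono hle

/-- The five groups `C, F, N₁, N₂, N₃` are pairwise non-conjugate in `GL₃(ℝ)`. -/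
theorem five_groups_pairwise_nonconjugate :
    ∀ H ∈ [CartanC, groupF, groupN1, groupN2, groupN3],
    ∀ K ∈ [CartanC, groupF, groupN1, groupN2, groupN3],
      H ≠ K → ¬ IsGLConjugate H K := by
  have : Std.Symm fun H K => ¬ IsGLConjugate H K := ⟨fun _ _ h h' => h h'.symm⟩
  refine List.Pairwise.forall ?_
  simp only [List.pairwise_cons, List.mem_cons, forall_eq_or_imp, List.not_mem_nil,
    List.Pairwise.nil, and_true, IsEmpty.forall_iff, forall_const]
  refine ⟨⟨?_, ?_, ?_, ?_⟩, ⟨?_, ?_, ?_⟩, ⟨?_, ?_⟩, ?_⟩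
  · exact not_isGLConjugate_of_eq_one_of_sub_one_sq
      (fun _ => eq_one_of_mem_CartanC_of_sub_one_sq_eq_zero)
      exists_mem_groupF_ne_one_sub_one_sq_eq_zero
  · exact not_isGLConjugate_of_trace exists_mem_CartanC_trace_ne_three
      fun _ => trace_eq_three_of_mem_groupN1
  · exact not_isGLConjugate_of_trace exists_mem_CartanC_trace_ne_three
      fun _ => trace_eq_three_of_mem_groupN2
  · exact not_isGLConjugate_of_trace exists_mem_CartanC_trace_ne_three
      fun _ => trace_eq_three_of_mem_groupN3
  · exact not_isGLConjugate_of_trace exists_mem_groupF_trace_ne_three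
      fun _ => trace_eq_three_of_mem_groupN1
  · exact not_isGLConjugate_of_trace exists_mem_groupF_trace_ne_three
      fun _ => trace_eq_three_of_mem_groupN2
  · exact not_isGLConjugate_of_trace exists_mem_groupF_trace_ne_three
      fun _ => trace_eq_three_of_mem_groupN3
  · exact not_isGLConjugate_of_sub_one_sq exists_mem_groupN1_sub_one_sq_ne_zero
      fun _ => sub_one_sq_eq_zero_of_mem_groupN2
  · exact not_isGLConjugate_of_sub_one_sq exists_mem_groupN1_sub_one_sq_ne_zero
      fun _ => sub_one_sq_eq_zero_of_mem_groupN3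
  · exact not_isGLConjugate_of_finrank_fixedSubspace_lt <|
      finrank_fixedSubspace_groupN2_le.trans_lt two_le_finrank_fixedSubspace_groupN3
end

section
/- Let δ, ε, η be hyperreal numbers with δ infinitesimal, |η| ≤ |δ|, |ε| ≤ |δ|, and η ≠ 0, and let P be the hyperreal matrix with rows (1, 1, 1), (0, δ, ε), (0, 0, η). Let C be the group of positive diagonal hyperreal matrices diag(a, b, 1/(ab)) in SL_3(*R). Then every matrix in sh(Fin(P C P^{-1})) is unipotent; i.e., if M ∈ P C P^{-1} has all entries finite, then the shadow of M has all three eigenvalues equal to 1. -/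
/-!
Conjugating `diag(a, b, c)` by `P` gives an upper triangular matrix with diagonal `a, b, c`
whose first row continues with `(b - a) / δ` and `(c - a - ep (b - a) / δ) / η`. If these are
finite, then `b - a` and `c - a` are infinitesimal, being combinations of the infinitesimals
`δ`, `η`, `ep` with finite coefficients. So `a, b, c` share a standard part `r` with `r ^ 3 = 1`,
forcing `r = 1`, and the shadow is upper triangular with ones on the diagonal.
-/

open Hyperreal Matrix

namespace ArchimedeanClass

section OrderedRing

variable {R : Type*} [CommRing R] [LinearOrder R] [IsStrictOrderedRing R] {x y : R}

theorem mk_add_pos (hx : 0 < mk x) (hy : 0 < mk y) : 0 < mk (x + y) :=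
  (lt_min hx hy).trans_le (min_le_mk_add x y)

theorem mk_pos_of_abs_le (hy : 0 < mk y) (h : |x| ≤ |y|) : 0 < mk x :=
  hy.trans_le (mk_le_mk_of_abs h)

theorem mk_mul_pos_of_pos_of_nonneg (hx : 0 < mk x) (hy : 0 ≤ mk y) : 0 < mk (x * y) := by
  rw [mk_mul]
  exact add_pos_of_pos_of_nonneg hx hy

end OrderedRing

section OrderedField

variable {K : Type*} [LinearOrder K] [Field K] [IsOrderedRing K] {x y z : K}

theorem stdPart_eq_of_mk_sub_pos (h : 0 < mk (y - x)) : stdPart y = stdPart x := by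
  simpa using stdPart_add_eq_right (y := x) h

theorem stdPart_eq_one_of_mul_eq_one (hx : 0 ≤ mk x) (hy : 0 ≤ mk y) (hz : 0 ≤ mk z)
    (hxy : 0 < mk (y - x)) (hxz : 0 < mk (z - x)) (h : x * y * z = 1) : stdPart x = 1 := by
  have hxy_fin : 0 ≤ mk (x * y) := by
    rw [mk_mul]
    exact add_nonneg hx hy
  have hcube : stdPart x ^ 3 = 1 := by
    rw [← stdPart_one (K := K), ← h, stdPart_mul hxy_fin hz, stdPart_mul hx hy,
      stdPart_eq_of_mk_sub_pos hxy, stdPart_eq_of_mk_sub_pos hxz]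
    ring
  exact (Odd.pow_inj (by decide)).1 (hcube.trans (one_pow 3).symm)

end OrderedField

end ArchimedeanClass

open ArchimedeanClass

theorem Matrix.IsUpperTriangular.map {n R S : Type*} [LT n] [Zero R] [Zero S]
    {M : Matrix n n R} (hM : M.IsUpperTriangular) {f : R → S} (hf : f 0 = 0) :
    (M.map f).IsUpperTriangular :=
  fun i j hij => by simp [hM hij, hf]

theorem Matrix.isUpperTriangular_fin_three {R : Type*} [Zero R] (a b c x y z : R) :
    (!![a, x, y; 0, b, z; 0, 0, c]).IsUpperTriangular := by
  intro i j hij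
  fin_cases i <;> fin_cases j <;> first | rfl | exact absurd hij (by decide)

theorem Matrix.mul_diagonal_mul_inv_fin_three {K : Type*} [Field K] {δ ep η : K}
    (hδ : δ ≠ 0) (hη : η ≠ 0) (a b c : K) :
    !![1, 1, 1; 0, δ, ep; 0, 0, η] * diagonal ![a, b, c] * (!![1, 1, 1; 0, δ, ep; 0, 0, η])⁻¹ =
      !![a, (b - a) / δ, (c - a - ep * ((b - a) / δ)) / η; 0, b, ep * (c - b) / η; 0, 0, c] := by
  have hdet : IsUnit (!![(1 : K), 1, 1; 0, δ, ep; 0, 0, η]).det := by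
    simp [det_fin_three, hδ, hη]
  have hconj : !![1, 1, 1; 0, δ, ep; 0, 0, η] * diagonal ![a, b, c] =
      !![a, (b - a) / δ, (c - a - ep * ((b - a) / δ)) / η; 0, b, ep * (c - b) / η; 0, 0, c] *
        !![1, 1, 1; 0, δ, ep; 0, 0, η] := by
    ext i j
    fin_cases i <;> fin_cases j <;> simp <;> field_simp <;> ring
  rw [hconj, Matrix.mul_assoc, mul_nonsing_inv _ hdet, Matrix.mul_one]

/-- If `δ` is infinitesimal, `|η| ≤ |δ|`, `|ep| ≤ |δ|`, `η ≠ 0`, and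
`P = !![1,1,1; 0,δ,ep; 0,0,η]`, then the shadow of any finite matrix in
`P C P⁻¹` (with `C` the positive diagonal group in SL₃(*ℝ)) is unipotent:
its characteristic polynomial is `(X - 1)³`. -/
theorem shadow_of_conjugate_is_unipotent
    (δ ep η : Hyperreal) (hδ : Infinitesimal δ)
    (hη : |η| ≤ |δ|) (hep : |ep| ≤ |δ|) (hη0 : η ≠ 0)
    (P : Matrix (Fin 3) (Fin 3) Hyperreal)
    (hP : P = !![1, 1, 1; 0, δ, ep; 0, 0, η])
    (a b : Hyperreal) (ha : 0 < a) (hb : 0 < b)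
    (M : Matrix (Fin 3) (Fin 3) Hyperreal)
    (hM : M = P * Matrix.diagonal ![a, b, 1 / (a * b)] * P⁻¹)
    (hfin : ∀ i j : Fin 3, ¬ (M i j).Infinite) :
    (Matrix.of fun i j : Fin 3 => st (M i j)).charpoly =
      (Polynomial.X - Polynomial.C 1) ^ 3 := by
  have hδ0 : δ ≠ 0 := by
    rintro rfl
    exact hη0 (abs_nonpos_iff.mp (by simpa using hη))
  rw [infinitesimal_iff] at hδ
  set c := 1 / (a * b)
  have habc : a * b * c = 1 := mul_one_div_cancel (mul_pos ha hb).ne'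
  rw [hP, mul_diagonal_mul_inv_fin_three hδ0 hη0] at hM
  subst hM
  simp only [infinite_iff, not_lt] at hfin
  have hfa : 0 ≤ mk a := hfin 0 0
  have hfb : 0 ≤ mk b := hfin 1 1
  have hfc : 0 ≤ mk c := hfin 2 2
  have hf01 : 0 ≤ mk ((b - a) / δ) := hfin 0 1
  have hf02 : 0 ≤ mk ((c - a - ep * ((b - a) / δ)) / η) := hfin 0 2
  have hba : 0 < mk (b - a) := by
    rw [show b - a = δ * ((b - a) / δ) by field_simp]
    exact mk_mul_pos_of_pos_of_nonneg hδ hf01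
  have hca : 0 < mk (c - a) := by
    rw [show c - a = η * ((c - a - ep * ((b - a) / δ)) / η) + ep * ((b - a) / δ) by
      field_simp; ring]
    exact mk_add_pos (mk_mul_pos_of_pos_of_nonneg (mk_pos_of_abs_le hδ hη) hf02)
      (mk_mul_pos_of_pos_of_nonneg (mk_pos_of_abs_le hδ hep) hf01)
  have hsa := stdPart_eq_one_of_mul_eq_one hfa hfb hfc hba hca habc
  have hsb : stdPart b = 1 := (stdPart_eq_of_mk_sub_pos hba).trans hsa
  have hsc : stdPart c = 1 := (stdPart_eq_of_mk_sub_pos hca).trans hsa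
  simp_rw [st_eq]
  refine (charpoly_of_isUpperTriangular _
    ((isUpperTriangular_fin_three a b c _ _ _).map (stdPart_zero (K := ℝ*)))).trans ?_
  simp [Fin.prod_univ_three, hsa, hsb, hsc]
  ring
end

section
/- Let δ be a nonzero hyperreal, and define G(δ) = { M(a) : a ∈ *R, a > 0 } ≤ SL_2(*R) where M(a) has rows (a, (a − 1/a)/δ), (0, 1/a). If δ is infinitesimal, then sh(Fin(G(δ))) equals the real parabolic group { rows (1, t), (0, 1) : t ∈ R }. If δ is appreciable (finite and not infinitesimal), then sh(Fin(G(δ))) is conjugate in SL_2(R) to the positive diagonal group { diag(a, 1/a) : a > 0 }. -/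
/-!
An element `M(a)` of `G(δ)` has a shadow exactly when `a` is finite and not infinitesimal (the
diagonal entries are `a` and `1/a`) and `(a - 1/a)/δ` is finite. If `δ` has a nonzero standard
part `s`, the shadow of `M(a)` is the real matrix given by the same formula with `st a` for `a`
and `s` for `δ`, and these real matrices form the diagonal group conjugated by the shear with
off-diagonal entry `1/s`. If `δ` is infinitesimal, finiteness of `(a - 1/a)/δ` forces
`a - 1/a ≈ 0`, so `st a = 1`; conversely `a = 1 + tδ/2` has `(a - 1/a)/δ = (t/2)(1 + 1/a) ≈ t`,
so every parabolic `!![1, t; 0, 1]` is a shadow.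
-/

set_option linter.deprecated false

open Hyperreal Matrix

/-- The conjugate `G(δ)` of the diagonal group of SL₂(*ℝ) stabilizing
`[1:0]` and `[1:δ]`. -/
noncomputable def Gdelta (δ : Hyperreal) : Set (Matrix (Fin 2) (Fin 2) Hyperreal) :=
  {M | ∃ a : Hyperreal, 0 < a ∧ M = !![a, (a - 1 / a) / δ; 0, 1 / a]}

/-- The shadow of the finite part of a set of hyperreal matrices. -/
def shFin (S : Set (Matrix (Fin 2) (Fin 2) Hyperreal)) :
    Set (Matrix (Fin 2) (Fin 2) ℝ) :=
  {A | ∃ M ∈ S, ∀ i j : Fin 2, IsSt (M i j) (A i j)}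

section Field

variable {K : Type*} [Field K]

def gdeltaMatrix (δ a : K) : Matrix (Fin 2) (Fin 2) K :=
  !![a, (a - 1 / a) / δ; 0, 1 / a]

def shear (c : K) : SpecialLinearGroup (Fin 2) K :=
  ⟨!![1, c; 0, 1], by simp [det_fin_two_of]⟩

theorem coe_shear_inv (c : K) :
    (((shear c)⁻¹ : SpecialLinearGroup (Fin 2) K) : Matrix (Fin 2) (Fin 2) K) =
      !![1, -c; 0, 1] := by
  change adjugate !![1, c; 0, 1] = _
  simp [adjugate_fin_two_of]

theorem shear_mul_gdeltaMatrix_mul_shear_inv {δ a : K} (hδ : δ ≠ 0) (ha : a ≠ 0) :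
    (shear δ⁻¹ : Matrix (Fin 2) (Fin 2) K) * gdeltaMatrix δ a *
      (((shear δ⁻¹)⁻¹ : SpecialLinearGroup (Fin 2) K) : Matrix (Fin 2) (Fin 2) K) =
        diagonal ![a, 1 / a] := by
  rw [coe_shear_inv]
  ext i j
  fin_cases i <;> fin_cases j <;> simp [shear, gdeltaMatrix]
  field_simp
  ring

theorem image_conj_shear_gdeltaMatrix [Preorder K] {δ : K} (hδ : δ ≠ 0) :
    (fun A => (shear δ⁻¹ : Matrix (Fin 2) (Fin 2) K) * A *
        (((shear δ⁻¹)⁻¹ : SpecialLinearGroup (Fin 2) K) : Matrix (Fin 2) (Fin 2) K)) ''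
        (gdeltaMatrix δ '' Set.Ioi 0) =
      {A | ∃ a : K, 0 < a ∧ A = diagonal ![a, 1 / a]} := by
  ext A
  simp only [Set.image_image, Set.mem_image, Set.mem_Ioi, Set.mem_setOf_eq]
  constructor
  · rintro ⟨a, ha, rfl⟩
    exact ⟨a, ha, shear_mul_gdeltaMatrix_mul_shear_inv hδ ha.ne'⟩
  · rintro ⟨a, ha, rfl⟩
    exact ⟨a, ha, shear_mul_gdeltaMatrix_mul_shear_inv hδ ha.ne'⟩

end Field

namespace Hyperreal

theorem IsSt.div {x y : ℝ*} {r s : ℝ} (hx : IsSt x r) (hy : IsSt y s) (hs : s ≠ 0) :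
    IsSt (x / y) (r / s) := by
  simpa only [div_eq_mul_inv] using hx.mul (hy.inv fun hy0 => hs (hy.unique hy0))

theorem IsSt.one_div {x : ℝ*} {r : ℝ} (hx : IsSt x r) (hr : r ≠ 0) : IsSt (1 / x) (1 / r) := by
  simpa using (isSt_refl_real 1).div hx hr

theorem IsSt.pos_of_isSt_one_div {x : ℝ*} {r r' : ℝ} (hx : 0 < x) (h : IsSt x r)
    (h' : IsSt (1 / x) r') : 0 < r := by
  refine lt_of_le_of_ne (infinitesimal_zero.le h hx.le) fun hr => ?_
  have hinf : Infinite (1 / x) := by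
    rw [_root_.one_div, ← infinitesimal_iff_infinite_inv hx.ne']
    rwa [← hr] at h
  exact h'.not_infinite hinf

end Hyperreal

theorem Gdelta_eq_image (δ : Hyperreal) : Gdelta δ = gdeltaMatrix δ '' Set.Ioi 0 := by
  ext M
  simp only [Gdelta, gdeltaMatrix, Set.mem_image, Set.mem_Ioi, Set.mem_setOf_eq, eq_comm]

theorem isSt_gdeltaMatrix {δ a : ℝ*} {s r : ℝ} (hδ : IsSt δ s) (hs : s ≠ 0) (ha : IsSt a r)
    (hr : r ≠ 0) (i j : Fin 2) : IsSt (gdeltaMatrix δ a i j) (gdeltaMatrix s r i j) := by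
  fin_cases i <;> fin_cases j
  · exact ha
  · exact (ha.sub (ha.one_div hr)).div hδ hs
  · exact infinitesimal_zero
  · exact ha.one_div hr

theorem eq_of_isSt_entries {M : Matrix (Fin 2) (Fin 2) ℝ*} {A B : Matrix (Fin 2) (Fin 2) ℝ}
    (hA : ∀ i j, IsSt (M i j) (A i j)) (hB : ∀ i j, IsSt (M i j) (B i j)) : A = B :=
  Matrix.ext fun i j => (hA i j).unique (hB i j)

theorem entries_of_isSt_gdeltaMatrix {δ a : ℝ*} {A : Matrix (Fin 2) (Fin 2) ℝ} (ha : 0 < a)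
    (h : ∀ i j, IsSt (gdeltaMatrix δ a i j) (A i j)) :
    0 < A 0 0 ∧ A 1 0 = 0 ∧ A 1 1 = 1 / A 0 0 := by
  have h00 : IsSt a (A 0 0) := h 0 0
  have h11 : IsSt (1 / a) (A 1 1) := h 1 1
  have hpos := h00.pos_of_isSt_one_div ha h11
  exact ⟨hpos, (h 1 0).unique infinitesimal_zero, h11.unique (h00.one_div hpos.ne')⟩

theorem shFin_gdeltaMatrix_of_isSt {δ : ℝ*} {s : ℝ} (hδ : IsSt δ s) (hs : s ≠ 0) :
    shFin (gdeltaMatrix δ '' Set.Ioi 0) = gdeltaMatrix s '' Set.Ioi 0 := by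
  ext A
  constructor
  · rintro ⟨_, ⟨a, ha, rfl⟩, h⟩
    have hpos := (entries_of_isSt_gdeltaMatrix ha h).1
    exact ⟨A 0 0, hpos, eq_of_isSt_entries (isSt_gdeltaMatrix hδ hs (h 0 0) hpos.ne') h⟩
  · rintro ⟨r, hr, rfl⟩
    exact ⟨gdeltaMatrix δ r, ⟨r, coe_pos.2 hr, rfl⟩,
      isSt_gdeltaMatrix hδ hs (isSt_refl_real r) hr.ne'⟩

theorem eq_parabolic_of_isSt_gdeltaMatrix {δ a : ℝ*} {A : Matrix (Fin 2) (Fin 2) ℝ} (hδ0 : δ ≠ 0)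
    (hδ : Infinitesimal δ) (ha : 0 < a) (h : ∀ i j, IsSt (gdeltaMatrix δ a i j) (A i j)) :
    A = !![1, A 0 1; 0, 1] := by
  obtain ⟨hpos, h10, h11⟩ := entries_of_isSt_gdeltaMatrix ha h
  have hsub : IsSt (a - 1 / a) (A 0 0 - 1 / A 0 0) := (h 0 0).sub (h11 ▸ h 1 1)
  have hzero : IsSt (a - 1 / a) 0 := by
    have h01 : IsSt ((a - 1 / a) / δ * δ) (A 0 1 * 0) := (h 0 1).mul hδ
    rwa [div_mul_cancel₀ _ hδ0, mul_zero] at h01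
  have h00 : A 0 0 = 1 := by
    have := hsub.unique hzero
    field_simp at this
    nlinarith
  rw [eta_fin_two A, h10, h11, h00]
  norm_num

theorem exists_isSt_gdeltaMatrix_parabolic {δ : ℝ*} (hδ0 : δ ≠ 0) (hδ : Infinitesimal δ) (t : ℝ) :
    ∃ a : ℝ*, 0 < a ∧ ∀ i j, IsSt (gdeltaMatrix δ a i j) (!![1, t; 0, 1] i j) := by
  have hone : IsSt (1 : ℝ*) 1 := by simpa using isSt_refl_real 1
  obtain ⟨a, ha_def⟩ : ∃ a : ℝ*, a = 1 + t * δ / 2 := ⟨_, rfl⟩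
  have ha : IsSt a 1 := by
    simpa [ha_def, mul_div_right_comm] using hone.add ((isSt_refl_real (t / 2)).mul hδ)
  have ha0 : 0 < a := by simpa using infinitesimal_zero.lt ha one_pos
  have h01 : (a - 1 / a) / δ = (t / 2 : ℝ) * (1 + 1 / a) := by
    have hsub : a - 1 = t * δ / 2 := by rw [ha_def]; ring
    field_simp
    push_cast
    linear_combination (a + 1) * hsub
  refine ⟨a, ha0, fun i j => ?_⟩
  fin_cases i <;> fin_cases j
  · exact ha
  · show IsSt ((a - 1 / a) / δ) t
    rw [h01]
    convert (isSt_refl_real (t / 2)).mul (hone.add (ha.one_div one_ne_zero)) using 1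
    ring
  · exact infinitesimal_zero
  · simpa [gdeltaMatrix] using ha.one_div one_ne_zero

theorem shFin_gdeltaMatrix_of_infinitesimal {δ : ℝ*} (hδ0 : δ ≠ 0) (hδ : Infinitesimal δ) :
    shFin (gdeltaMatrix δ '' Set.Ioi 0) = {A | ∃ t : ℝ, A = !![1, t; 0, 1]} := by
  ext A
  constructor
  · rintro ⟨_, ⟨a, ha, rfl⟩, h⟩
    exact ⟨A 0 1, eq_parabolic_of_isSt_gdeltaMatrix hδ0 hδ ha h⟩
  · rintro ⟨t, rfl⟩
    obtain ⟨a, ha, h⟩ := exists_isSt_gdeltaMatrix_parabolic hδ0 hδ t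
    exact ⟨gdeltaMatrix δ a, ⟨a, ha, rfl⟩, h⟩

/-- If `δ` is infinitesimal then `sh(Fin(G(δ)))` is the parabolic group; if
`δ` is appreciable then `sh(Fin(G(δ)))` is conjugate in SL₂(ℝ) to the positive
diagonal group. -/
theorem shadow_of_Gdelta (δ : Hyperreal) (hδ0 : δ ≠ 0) :
    (Infinitesimal δ →
      shFin (Gdelta δ) = {A | ∃ t : ℝ, A = !![1, t; 0, 1]}) ∧
    (¬ Infinitesimal δ → ¬ δ.Infinite →
      ∃ P : Matrix.SpecialLinearGroup (Fin 2) ℝ,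
        (fun A => (P : Matrix (Fin 2) (Fin 2) ℝ) * A *
          ((P⁻¹ : Matrix.SpecialLinearGroup (Fin 2) ℝ) :
            Matrix (Fin 2) (Fin 2) ℝ)) '' shFin (Gdelta δ) =
          {A : Matrix (Fin 2) (Fin 2) ℝ | ∃ a : ℝ, 0 < a ∧
            A = Matrix.diagonal ![a, 1 / a]}) := by
  rw [Gdelta_eq_image]
  refine ⟨shFin_gdeltaMatrix_of_infinitesimal hδ0, fun hδ hδfin => ?_⟩
  have hst : IsSt δ (st δ) := isSt_st' hδfin
  have hst0 : st δ ≠ 0 := fun h => hδ (by rwa [h] at hst)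
  exact ⟨shear (st δ)⁻¹, by
    rw [shFin_gdeltaMatrix_of_isSt hst hst0, image_conj_shear_gdeltaMatrix hst0]⟩
end
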